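/- arXiv:0905.4248 — 8 statements merged into one kernel-verified Lean document; each statement's English description precedes it below -/
import Mathlib

section
/- For a finite abelian group G with |G| ≥ 2, for any zero-sum sequence B over G and any nonzero g ∈ G, one has max L(B·(-g)·g) = 1 + max L(B). Consequently, D_{k+1}(G) ≥ D_k(G) + 2 for each k ≥ 1. -/
open Multiset

/-- A nonempty zero-sum sequence (multiset) over `G`. -/
def IsZeroSumSeq {G : Type*} [AddCommGroup G] (S : Multiset G) : Prop :=
  S ≠ 0 ∧ S.sum = 0

/-- A minimal zero-sum sequence: nonempty, zero-sum, and with no proper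
nonempty zero-sum subsequence. -/
def IsMinZeroSum {G : Type*} [AddCommGroup G] (S : Multiset G) : Prop :=
  S ≠ 0 ∧ S.sum = 0 ∧ ∀ T : Multiset G, T ≤ S → T ≠ 0 → T.sum = 0 → T = S

/-- `ζ` is a factorization of `B` into minimal zero-sum sequences. -/
def IsFactorization {G : Type*} [AddCommGroup G] (ζ : Multiset (Multiset G))
    (B : Multiset G) : Prop :=
  ζ.sum = B ∧ ∀ A ∈ ζ, IsMinZeroSum A

/-- The set of lengths `L(B)` of factorizations of `B` into minimal zero-sum
sequences. -/
def lengthSet {G : Type*} [AddCommGroup G] (B : Multiset G) : Set ℕ :=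
  { n | ∃ ζ : Multiset (Multiset G), IsFactorization ζ B ∧ Multiset.card ζ = n }

/-- `max L(B)`, the maximal length of a factorization of `B` into minimal
zero-sum sequences. -/
noncomputable def maxL {G : Type*} [AddCommGroup G] (B : Multiset G) : ℕ :=
  sSup (lengthSet B)

/-- `S` contains `k` disjoint nonempty zero-sum subsequences. -/
def HasKDisjointZeroSum {G : Type*} [AddCommGroup G] (k : ℕ) (S : Multiset G) : Prop :=
  ∃ T : Multiset (Multiset G), Multiset.card T = k ∧
    (∀ A ∈ T, IsZeroSumSeq A) ∧ T.sum ≤ S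

/-- The `k`-wise Davenport constant: the smallest `ℓ` such that every sequence
over `G` of length at least `ℓ` has `k` disjoint nonempty zero-sum
subsequences. -/
noncomputable def Dk (G : Type*) [AddCommGroup G] (k : ℕ) : ℕ :=
  sInf { ℓ : ℕ | ∀ S : Multiset G, ℓ ≤ Multiset.card S → HasKDisjointZeroSum k S }

/-- `s_{≤ k}(G)` as an extended natural number: the smallest `m` such that every
sequence over `G` of length at least `m` has a nonempty zero-sum subsequence of
length at most `k`. -/
noncomputable def sLE (G : Type*) [AddCommGroup G] (k : ℕ) : ℕ∞ :=
  sInf { m : ℕ∞ | ∀ S : Multiset G, m ≤ (Multiset.card S : ℕ∞) →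
    ∃ T ≤ S, T ≠ 0 ∧ T.sum = 0 ∧ Multiset.card T ≤ k }

/-- `s_{≤ k}(G)` as a natural number (used when it is known to be finite). -/
noncomputable def sleN (G : Type*) [AddCommGroup G] (k : ℕ) : ℕ :=
  sInf { m : ℕ | ∀ S : Multiset G, m ≤ Multiset.card S →
    ∃ T ≤ S, T ≠ 0 ∧ T.sum = 0 ∧ Multiset.card T ≤ k }

/-- `η(G) = s_{≤ exp(G)}(G)`. -/
noncomputable def etaC (G : Type*) [AddCommGroup G] : ℕ :=
  sleN G (AddMonoid.exponent G)

/-! Disjoint zero-sum pieces of `g·(-g)·S` yield one piece fewer inside `S`. If `g` and `-g` lie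
in different pieces, these two pieces with `g` and `-g` removed merge into a single zero-sum piece,
nonempty because the part left of the piece through `g` sums to `-g ≠ 0`; otherwise dropping the
piece through `g` (or `-g`, or any piece) suffices. This gives `D_k(G) ≤ D_{k+1}(G) - 2` at once.
Since zero-sum pieces refine into minimal ones and a leftover of a zero-sum `B` is again zero-sum,
`max L(B)` is the largest number of disjoint zero-sum pieces in `B`, which bounds
`max L(g·(-g)·B) ≤ 1 + max L(B)`; adding `{g, -g}` to a longest factorization of `B` gives `≥`.
-/

lemma Multiset.card_le_card_sum {α : Type*} {T : Multiset (Multiset α)} (hT : ∀ A ∈ T, A ≠ 0) :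
    card T ≤ card T.sum :=
  calc card T = card (T.map card) • 1 := by simp
    _ ≤ (T.map card).sum :=
      Multiset.card_nsmul_le_sum (by simpa [Nat.one_le_iff_ne_zero] using hT)
    _ = card T.sum := (Multiset.card_join T).symm

section

variable {G : Type*} [AddCommGroup G]

lemma HasKDisjointZeroSum.le_card {k : ℕ} {S : Multiset G} (h : HasKDisjointZeroSum k S) :
    k ≤ card S := by
  obtain ⟨T, rfl, hT, hle⟩ := h
  exact (card_le_card_sum fun A hA => (hT A hA).1).trans (card_le_card hle)

lemma HasKDisjointZeroSum.of_succ {k : ℕ} {S : Multiset G}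
    (h : HasKDisjointZeroSum (k + 1) S) : HasKDisjointZeroSum k S := by
  obtain ⟨T, hcard, hT, hle⟩ := h
  obtain ⟨A, R, rfl, rfl⟩ := card_eq_succ_iff.1 hcard
  refine ⟨R, rfl, fun B hB => hT B (mem_cons_of_mem hB), le_trans ?_ hle⟩
  simp

lemma isZeroSumSeq_cons_iff {g : G} {A : Multiset G} :
    IsZeroSumSeq (g ::ₘ A) ↔ A.sum = -g := by
  simp [IsZeroSumSeq, eq_neg_iff_add_eq_zero, add_comm]

lemma HasKDisjointZeroSum.of_cons_neg_cons_of_mem {k : ℕ} {g : G} {S : Multiset G} (hg : g ≠ 0)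
    {T : Multiset (Multiset G)} (hcard : card T = k + 1) (hT : ∀ A ∈ T, IsZeroSumSeq A)
    (hle : T.sum ≤ g ::ₘ -g ::ₘ S) (hgT : g ∈ T.sum) : HasKDisjointZeroSum k S := by
  obtain ⟨A, hAT, hgA⟩ := mem_join.1 hgT
  obtain ⟨R, rfl⟩ := exists_cons_of_mem hAT
  obtain ⟨A₀, rfl⟩ := exists_cons_of_mem hgA
  have hA₀ : A₀.sum = -g := isZeroSumSeq_cons_iff.1 (hT _ (mem_cons_self _ _))
  have hR : ∀ B ∈ R, IsZeroSumSeq B := fun B hB => hT B (mem_cons_of_mem hB)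
  have hle' : A₀ + R.sum ≤ -g ::ₘ S := by simpa using hle
  by_cases hgR : -g ∈ R.sum
  · obtain ⟨A', hA'R, hgA'⟩ := mem_join.1 hgR
    obtain ⟨R', rfl⟩ := exists_cons_of_mem hA'R
    obtain ⟨A₁, rfl⟩ := exists_cons_of_mem hgA'
    have hA₁ : A₁.sum = g := by
      simpa using isZeroSumSeq_cons_iff.1 (hR _ (mem_cons_self _ _))
    refine ⟨(A₀ + A₁) ::ₘ R', by simpa using hcard, ?_, ?_⟩
    · simp only [mem_cons, forall_eq_or_imp]
      refine ⟨⟨fun h => hg ?_, by simp [hA₀, hA₁]⟩, fun B hB => hR B (mem_cons_of_mem hB)⟩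
      rw [← neg_eq_zero, ← hA₀, (add_eq_zero.1 h).1, sum_zero]
    · simpa [add_assoc, add_left_comm] using hle'
  · refine ⟨R, by simpa using hcard, hR, ?_⟩
    exact (le_cons_of_notMem hgR).1 ((le_add_left _ _).trans hle')

lemma HasKDisjointZeroSum.of_cons_neg_cons {k : ℕ} {g : G} {S : Multiset G} (hg : g ≠ 0)
    (h : HasKDisjointZeroSum (k + 1) (g ::ₘ -g ::ₘ S)) : HasKDisjointZeroSum k S := by
  obtain ⟨T, hcard, hT, hle⟩ := h
  by_cases hS : T.sum ≤ S
  · exact HasKDisjointZeroSum.of_succ ⟨T, hcard, hT, hS⟩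
  by_cases hgT : g ∈ T.sum
  · exact of_cons_neg_cons_of_mem hg hcard hT hle hgT
  have hgT' : -g ∈ T.sum := by
    by_contra hgT'
    exact hS ((le_cons_of_notMem hgT').1 ((le_cons_of_notMem hgT).1 hle))
  refine of_cons_neg_cons_of_mem (neg_ne_zero.2 hg) hcard hT ?_ hgT'
  rwa [neg_neg, cons_swap]

lemma sum_sum_eq_zero_of_isZeroSumSeq {T : Multiset (Multiset G)} (hT : ∀ A ∈ T, IsZeroSumSeq A) :
    T.sum.sum = 0 := by
  rw [← Multiset.join, sum_join]
  exact sum_eq_zero fun x hx => by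
    obtain ⟨A, hA, rfl⟩ := mem_map.1 hx
    exact (hT A hA).2

lemma IsFactorization.add {ζ ξ : Multiset (Multiset G)} {A B : Multiset G}
    (hA : IsFactorization ζ A) (hB : IsFactorization ξ B) : IsFactorization (ζ + ξ) (A + B) :=
  ⟨by rw [sum_add, hA.1, hB.1], fun C hC => (mem_add.1 hC).elim (hA.2 C) (hB.2 C)⟩

lemma IsFactorization.hasKDisjointZeroSum {ζ : Multiset (Multiset G)} {B : Multiset G}
    (h : IsFactorization ζ B) : HasKDisjointZeroSum (card ζ) B :=
  ⟨ζ, rfl, fun A hA => ⟨(h.2 A hA).1, (h.2 A hA).2.1⟩, h.1.le⟩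

lemma exists_isFactorization {B : Multiset G} (hB : B.sum = 0) : ∃ ζ, IsFactorization ζ B := by
  classical
  induction B using Multiset.strongInductionOn with
  | ih B ih =>
  by_cases hmin : IsMinZeroSum B
  · exact ⟨{B}, by simp, by simpa⟩
  by_cases h0 : B = 0
  · exact ⟨0, by simp [h0], by simp⟩
  obtain ⟨T, hTB, hT0, hTs, hTB'⟩ : ∃ T ≤ B, T ≠ 0 ∧ T.sum = 0 ∧ T ≠ B := by
    simpa [IsMinZeroSum, h0, hB] using hmin
  have hsplit : T + (B - T) = B := add_tsub_cancel_of_le hTB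
  obtain ⟨ζ, hζ⟩ := ih T (lt_of_le_of_ne hTB hTB') hTs
  obtain ⟨ξ, hξ⟩ := ih (B - T) ((lt_add_of_pos_left _ (pos_iff_ne_zero.2 hT0)).trans_eq hsplit)
    (by rwa [← hsplit, sum_add, hTs, zero_add] at hB)
  exact ⟨ζ + ξ, hsplit ▸ hζ.add hξ⟩

lemma lengthSet_bddAbove (B : Multiset G) : BddAbove (lengthSet B) :=
  ⟨card B, fun _ ⟨_, hζ, hcard⟩ => hcard ▸ hζ.hasKDisjointZeroSum.le_card⟩

lemma le_maxL {n : ℕ} {B : Multiset G} (h : n ∈ lengthSet B) : n ≤ maxL B :=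
  le_csSup (lengthSet_bddAbove B) h

lemma exists_isFactorization_card_eq_maxL {B : Multiset G} (hB : B.sum = 0) :
    ∃ ζ, IsFactorization ζ B ∧ card ζ = maxL B := by
  obtain ⟨ζ, hζ⟩ := exists_isFactorization hB
  exact Nat.sSup_mem (s := lengthSet B) ⟨_, ζ, hζ, rfl⟩ (lengthSet_bddAbove B)

lemma card_le_maxL_sum {T : Multiset (Multiset G)} (hT : ∀ A ∈ T, IsZeroSumSeq A) :
    card T ≤ maxL T.sum := by
  suffices ∃ ζ, IsFactorization ζ T.sum ∧ card T ≤ card ζ by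
    obtain ⟨ζ, hζ, hcard⟩ := this
    exact hcard.trans (le_maxL ⟨ζ, hζ, rfl⟩)
  induction T using Multiset.induction with
  | empty => exact ⟨0, ⟨by simp, by simp⟩, le_rfl⟩
  | cons A T ih =>
    obtain ⟨hA0, hA⟩ := hT A (mem_cons_self _ _)
    obtain ⟨ζ, hζ, hcard⟩ := ih fun B hB => hT B (mem_cons_of_mem hB)
    obtain ⟨ζA, hζA⟩ := exists_isFactorization hA
    have hζA0 : ζA ≠ 0 := by
      rintro rfl
      exact hA0 (by simpa using hζA.1.symm)
    refine ⟨ζA + ζ, by simpa using hζA.add hζ, ?_⟩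
    have := card_pos.2 hζA0
    rw [card_add, card_cons]
    omega

lemma HasKDisjointZeroSum.le_maxL {k : ℕ} {B : Multiset G} (hB : B.sum = 0)
    (h : HasKDisjointZeroSum k B) : k ≤ maxL B := by
  classical
  obtain ⟨T, rfl, hT, hle⟩ := h
  have hsplit : B - T.sum + T.sum = B := tsub_add_cancel_of_le hle
  have hR : (B - T.sum).sum = 0 := by
    rwa [← hsplit, sum_add, sum_sum_eq_zero_of_isZeroSumSeq hT, add_zero] at hB
  by_cases hR0 : B - T.sum = 0
  · have hTB : T.sum = B := le_antisymm hle (tsub_eq_zero_iff_le.1 hR0)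
    exact hTB ▸ card_le_maxL_sum hT
  · calc card T ≤ card ((B - T.sum) ::ₘ T) := by simp
      _ ≤ maxL ((B - T.sum) ::ₘ T).sum :=
        card_le_maxL_sum (forall_mem_cons.2 ⟨⟨hR0, hR⟩, hT⟩)
      _ = maxL B := by rw [sum_cons, hsplit]

theorem maxL_cons_neg_cons {B : Multiset G} (hB : B.sum = 0) {g : G} (hg : g ≠ 0) :
    maxL (g ::ₘ -g ::ₘ B) = 1 + maxL B := by
  obtain ⟨ζ, hζ, hcard⟩ := exists_isFactorization_card_eq_maxL (B := g ::ₘ -g ::ₘ B) (by simp [hB])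
  obtain ⟨ξ, hξ, hξcard⟩ := exists_isFactorization_card_eq_maxL hB
  apply le_antisymm
  · obtain ⟨n, hn⟩ : ∃ n, card ζ = n + 1 :=
      Nat.exists_eq_succ_of_ne_zero (by rintro h; simpa [card_eq_zero.1 h] using hζ.1)
    have := ((hn ▸ hζ.hasKDisjointZeroSum).of_cons_neg_cons hg).le_maxL hB
    omega
  · have := card_le_maxL_sum (T := (g ::ₘ -g ::ₘ 0) ::ₘ ξ)
      (forall_mem_cons.2 ⟨⟨by simp, by simp⟩, fun A hA => ⟨(hξ.2 A hA).1, (hξ.2 A hA).2.1⟩⟩)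
    rwa [card_cons, sum_cons, hξ.1, cons_add, cons_add, zero_add, hξcard, add_comm] at this

section Fintype

variable [Fintype G]

lemma hasKDisjointZeroSum_of_card_le {k : ℕ} {S : Multiset G}
    (h : Fintype.card G * (k * Fintype.card G) ≤ card S) : HasKDisjointZeroSum k S := by
  classical
  -- pigeonhole: some `x` occurs `k * |G|` times in `S`, and `|G|` copies of `x` sum to zero
  obtain ⟨x, -, hx⟩ := Finset.exists_le_of_sum_le (s := Finset.univ)
    (f := fun _ => k * Fintype.card G) (g := fun x => count x S) Finset.univ_nonempty
    (by simpa [sum_count_eq_card] using h)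
  refine ⟨replicate k (replicate (Fintype.card G) x), card_replicate _ _, fun A hA => ?_, ?_⟩
  · rw [eq_of_mem_replicate hA]
    exact ⟨by rw [← card_pos, card_replicate]; exact Fintype.card_pos, by simp [card_nsmul_eq_zero]⟩
  · rw [sum_replicate, nsmul_replicate]
    exact le_count_iff_replicate_le.1 hx

lemma hasKDisjointZeroSum_of_Dk_le {k : ℕ} {S : Multiset G} (h : Dk G k ≤ card S) :
    HasKDisjointZeroSum k S :=
  Nat.sInf_mem (s := {ℓ | ∀ S : Multiset G, ℓ ≤ card S → HasKDisjointZeroSum k S})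
    ⟨_, fun _ => hasKDisjointZeroSum_of_card_le⟩ S h

lemma le_Dk (k : ℕ) : k ≤ Dk G k := by
  simpa using (hasKDisjointZeroSum_of_Dk_le (S := replicate (Dk G k) (0 : G)) (by simp)).le_card

lemma Dk_add_two_le {g : G} (hg : g ≠ 0) {k : ℕ} (hk : 1 ≤ k) : Dk G k + 2 ≤ Dk G (k + 1) := by
  have h2 : 2 ≤ Dk G (k + 1) := (by omega : 2 ≤ k + 1).trans (le_Dk _)
  have : Dk G k ≤ Dk G (k + 1) - 2 := Nat.sInf_le fun S hS =>
    (hasKDisjointZeroSum_of_Dk_le (S := g ::ₘ -g ::ₘ S) (by rw [card_cons, card_cons]; omega)).of_cons_neg_cons hg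
  omega

end Fintype

end

theorem statement1 {G : Type*} [AddCommGroup G] [Fintype G]
    (hG : 2 ≤ Fintype.card G) :
    (∀ B : Multiset G, B.sum = 0 → ∀ g : G, g ≠ 0 →
      maxL (g ::ₘ (-g) ::ₘ B) = 1 + maxL B) ∧
    ∀ k : ℕ, 1 ≤ k → Dk G k + 2 ≤ Dk G (k + 1) := by
  obtain ⟨g₀, hg₀⟩ := Fintype.exists_ne_of_one_lt_card hG 0
  exact ⟨fun B hB g hg => maxL_cons_neg_cons hB hg, fun k hk => Dk_add_two_le hg₀ hk⟩
end

section
/- Let G be a finite abelian group, k ≥ 1, and ℓ ≥ 1. Then D_{k+1}(G) ≤ max{D_k(G) + ℓ, s_{≤ℓ}(G) − 1}. -/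
/-!
Let `S` have length at least `max (D_k + ℓ) (s_{≤ℓ} - 1)`. If `S` has a zero-sum subsequence
`T` of length at most `ℓ`, then `S - T` still has length at least `D_k`, so it contains `k`
disjoint zero-sum subsequences and `T` is the `(k+1)`-st. Otherwise append `-σ(S)` to `S`: the
longer sequence has a short zero-sum subsequence, which must use the new element, so some
`U ≤ S` of length less than `ℓ` has `σ(U) = σ(S)`. Then `S - U` is a zero-sum sequence of
length greater than `D_k`; removing one element from it leaves room for `k` disjoint zero-sum
subsequences, and their complement in `S - U` is a nonempty zero-sum subsequence.
-/

open Multiset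

section

variable {G : Type*} [AddCommGroup G]

def HasShortZeroSum (ℓ : ℕ) (S : Multiset G) : Prop :=
  ∃ T ≤ S, T ≠ 0 ∧ T.sum = 0 ∧ card T ≤ ℓ

namespace HasKDisjointZeroSum

variable {k : ℕ} {S T : Multiset G}

lemma mono (h : HasKDisjointZeroSum k S) (hST : S ≤ T) : HasKDisjointZeroSum k T :=
  let ⟨F, hF, hF0, hFS⟩ := h
  ⟨F, hF, hF0, hFS.trans hST⟩

lemma of_succ_s3 (h : HasKDisjointZeroSum (k + 1) S) : HasKDisjointZeroSum k S := by
  obtain ⟨F, hF, hF0, hFS⟩ := h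
  obtain ⟨A, hA⟩ := card_pos_iff_exists_mem.mp (hF ▸ k.succ_pos : 0 < card F)
  obtain ⟨F', rfl⟩ := exists_cons_of_mem hA
  refine ⟨F', by simpa using hF, fun B hB => hF0 B (mem_cons_of_mem hB), le_trans ?_ hFS⟩
  rw [sum_cons]
  exact le_add_left le_rfl

lemma zeroSum_add (h : HasKDisjointZeroSum k S) (hT : IsZeroSumSeq T) :
    HasKDisjointZeroSum (k + 1) (T + S) := by
  obtain ⟨F, hF, hF0, hFS⟩ := h
  refine ⟨T ::ₘ F, by simp [hF], ?_, by simpa using add_le_add_left hFS T⟩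
  simpa [forall_mem_cons] using ⟨hT, hF0⟩

/-- The complement of the `k` subsequences contains `e`, and it is zero-sum. -/
lemma succ_of_sum_eq_zero [DecidableEq G] {e : G} (hS : S.sum = 0) (he : e ∈ S)
    (h : HasKDisjointZeroSum k (S.erase e)) : HasKDisjointZeroSum (k + 1) S := by
  obtain ⟨F, hF, hF0, hFS⟩ := h
  have hFS' : F.sum ≤ S := hFS.trans (erase_le e S)
  have hrest : S - F.sum + F.sum = S := tsub_add_cancel_of_le hFS'
  have hF_sum : F.sum.sum = 0 := by
    rw [← join, sum_join]
    exact sum_eq_zero fun x hx => by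
      obtain ⟨A, hA, rfl⟩ := mem_map.mp hx
      exact (hF0 A hA).2
  have hrest_ne : S - F.sum ≠ 0 := by
    intro h0
    rw [h0, zero_add] at hrest
    exact (erase_lt.mpr he).not_ge (hrest ▸ hFS)
  have hrest_sum : (S - F.sum).sum = 0 := by
    simpa [hS, hF_sum] using congrArg Multiset.sum hrest
  exact hrest ▸ HasKDisjointZeroSum.zeroSum_add ⟨F, hF, hF0, le_rfl⟩ ⟨hrest_ne, hrest_sum⟩

end HasKDisjointZeroSum

lemma exists_le_sum_eq_neg_of_hasShortZeroSum_cons [DecidableEq G] {ℓ : ℕ} {g : G}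
    {S : Multiset G} (hS : ¬ HasShortZeroSum ℓ S) (hgS : HasShortZeroSum ℓ (g ::ₘ S)) :
    ∃ U ≤ S, U.sum = -g ∧ card U < ℓ := by
  obtain ⟨T, hTS, hT0, hT, hTℓ⟩ := hgS
  have hgT : g ∈ T := by
    by_contra hg
    exact hS ⟨T, (le_cons_of_notMem hg).mp hTS, hT0, hT, hTℓ⟩
  refine ⟨T.erase g, erase_le_iff_le_cons.mpr hTS, ?_, ?_⟩
  · rw [eq_neg_iff_add_eq_zero, add_comm, sum_erase hgT, hT]
  · rw [card_erase_of_mem hgT]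
    exact (Nat.pred_lt (card_pos.mpr hT0).ne').trans_le hTℓ

lemma hasKDisjointZeroSum_succ_of_le_card {k ℓ d m : ℕ}
    (hd : ∀ S : Multiset G, d ≤ card S → HasKDisjointZeroSum k S)
    (hm : ∀ S : Multiset G, m ≤ card S → HasShortZeroSum ℓ S)
    {S : Multiset G} (hS : max (d + ℓ) (m - 1) ≤ card S) :
    HasKDisjointZeroSum (k + 1) S := by
  classical
  rw [max_le_iff] at hS
  by_cases hshort : HasShortZeroSum ℓ S
  · obtain ⟨T, hTS, hT0, hT, hTℓ⟩ := hshort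
    have hrest : d ≤ card (S - T) := by rw [card_sub hTS]; omega
    simpa [add_tsub_cancel_of_le hTS] using (hd _ hrest).zeroSum_add ⟨hT0, hT⟩
  · obtain ⟨U, hUS, hU, hUℓ⟩ := exists_le_sum_eq_neg_of_hasShortZeroSum_cons hshort
      (hm (-S.sum ::ₘ S) (by rw [card_cons]; omega))
    have hcard : d + 1 ≤ card (S - U) := by rw [card_sub hUS]; omega
    have hsum : (S - U).sum = 0 := by
      have := congrArg Multiset.sum (tsub_add_cancel_of_le hUS)
      rw [sum_add, hU, neg_neg] at this
      exact add_eq_right.mp this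
    obtain ⟨e, he⟩ := card_pos_iff_exists_mem.mp (show 0 < card (S - U) by omega)
    have hk : HasKDisjointZeroSum k ((S - U).erase e) :=
      hd _ (by rw [card_erase_of_mem he, Nat.pred_eq_sub_one]; omega)
    exact (hk.succ_of_sum_eq_zero hsum he).mono tsub_le_self

lemma hasKDisjointZeroSum_of_Dk_le_card {k : ℕ}
    (hk : ∃ n, ∀ S : Multiset G, n ≤ card S → HasKDisjointZeroSum k S)
    {S : Multiset G} (hS : Dk G k ≤ card S) : HasKDisjointZeroSum k S :=
  Nat.sInf_mem hk S hS

lemma Dk_succ_le {k ℓ m : ℕ} (hm : ∀ S : Multiset G, m ≤ card S → HasShortZeroSum ℓ S) :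
    Dk G (k + 1) ≤ max (Dk G k + ℓ) (m - 1) := by
  by_cases hk : ∃ n, ∀ S : Multiset G, n ≤ card S → HasKDisjointZeroSum (k + 1) S
  · refine Nat.sInf_le fun S hS => hasKDisjointZeroSum_succ_of_le_card
      (fun S => hasKDisjointZeroSum_of_Dk_le_card ?_) hm hS
    obtain ⟨n, hn⟩ := hk
    exact ⟨n, fun S hS => (hn S hS).of_succ_s3⟩
  -- otherwise `Dk G (k + 1)` is the junk value `sInf ∅ = 0`
  · have hempty : {n | ∀ S : Multiset G, n ≤ card S → HasKDisjointZeroSum (k + 1) S} = ∅ :=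
      Set.eq_empty_of_forall_notMem fun n hn => hk ⟨n, hn⟩
    simp [Dk, hempty]

lemma hasShortZeroSum_of_sLE_le_card {ℓ : ℕ} (hℓ : sLE G ℓ ≠ ⊤) {S : Multiset G}
    (hS : sLE G ℓ ≤ card S) : HasShortZeroSum ℓ S := by
  have hne : {m : ℕ∞ | ∀ S : Multiset G, m ≤ card S → HasShortZeroSum ℓ S}.Nonempty := by
    refine Set.nonempty_iff_ne_empty.mpr fun h => hℓ ?_
    change sInf {m : ℕ∞ | ∀ S : Multiset G, m ≤ card S → HasShortZeroSum ℓ S} = ⊤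
    rw [h, sInf_empty]
  exact csInf_mem hne S hS

end

theorem statement3_general {G : Type*} [AddCommGroup G] (k ℓ : ℕ) :
    (Dk G (k + 1) : ℕ∞) ≤ max ((Dk G k : ℕ∞) + (ℓ : ℕ∞)) (sLE G ℓ - 1) := by
  rcases eq_or_ne (sLE G ℓ) ⊤ with htop | hfin
  · simp [htop]
  obtain ⟨m, hm⟩ := ENat.ne_top_iff_exists.mp hfin
  have hle := Dk_succ_le (k := k) (m := m) fun S hS =>
    hasShortZeroSum_of_sLE_le_card hfin (by rw [← hm]; exact_mod_cast hS)
  calc (Dk G (k + 1) : ℕ∞) ≤ (max (Dk G k + ℓ) (m - 1) : ℕ) := by exact_mod_cast hle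
    _ = _ := by rw [Nat.mono_cast.map_max, ENat.natCast_sub, Nat.cast_add, Nat.cast_one, hm]

theorem statement3 {G : Type*} [AddCommGroup G] [Fintype G] (k ℓ : ℕ)
    (hk : 1 ≤ k) (hℓ : 1 ≤ ℓ) :
    (Dk G (k + 1) : ℕ∞) ≤ max ((Dk G k : ℕ∞) + (ℓ : ℕ∞)) (sLE G ℓ - 1) :=
  statement3_general k ℓ
end

section
/- Let G be a finite abelian group, k ≥ 1, and ℓ with exp(G) ≤ ℓ ≤ D(G) − 1. Then D_k(G) ≤ (k−1)·ℓ + max{D(G), s_{≤ℓ}(G) − ℓ}. In particular, D_k(G) ≤ (k−1)·exp(G) + max{D(G), η(G) − exp(G)}. -/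
open Multiset

/-! A zero-sum subsequence of length at most `ℓ` exists in every sequence of length at least
`s_{≤ℓ}(G)`. Removing it from a sequence of length at least `k ℓ + max (D(G), s_{≤ℓ}(G) - ℓ)`
leaves length at least `(k - 1) ℓ + max (D(G), s_{≤ℓ}(G) - ℓ)`, so induction on `k` produces
`k + 1` disjoint zero-sum subsequences, the last one coming from the definition of `D(G)`.
Both infima are attained (their sets are nonempty) because, once `exp(G) ≤ ℓ`, every sequence
of length greater than `|G| (exp(G) - 1)` contains some element `exp(G)` times. -/

theorem Multiset.exists_lt_count_of_card_mul_lt {α : Type*} [Fintype α] [DecidableEq α]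
    {S : Multiset α} {n : ℕ} (h : Fintype.card α * n < card S) : ∃ a, n < S.count a := by
  obtain ⟨a, -, ha⟩ := Finset.exists_lt_of_sum_lt (s := Finset.univ) (f := fun _ => n)
    (g := S.count) (by simpa [mul_comm] using h)
  exact ⟨a, ha⟩

theorem HasKDisjointZeroSum.add_one {G : Type*} [AddCommGroup G] [DecidableEq G] {k : ℕ}
    {S T : Multiset G}
    (hTS : T ≤ S) (hT : IsZeroSumSeq T) (h : HasKDisjointZeroSum k (S - T)) :
    HasKDisjointZeroSum (k + 1) S := by
  obtain ⟨U, hU, hUzero, hUle⟩ := h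
  refine ⟨T ::ₘ U, by simp [hU], ?_, ?_⟩
  · rintro A hA
    rcases mem_cons.mp hA with rfl | hA
    exacts [hT, hUzero A hA]
  · calc (T ::ₘ U).sum = T + U.sum := sum_cons T U
      _ ≤ T + (S - T) := add_le_add_right hUle T
      _ = S := add_tsub_cancel_of_le hTS

theorem hasKDisjointZeroSum_add_one_of_card_le {G : Type*} [AddCommGroup G] [DecidableEq G]
    {D s ℓ : ℕ}
    (hD : ∀ S : Multiset G, D ≤ card S → HasKDisjointZeroSum 1 S)
    (hs : ∀ S : Multiset G, s ≤ card S → ∃ T ≤ S, T ≠ 0 ∧ T.sum = 0 ∧ card T ≤ ℓ) :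
    ∀ (k : ℕ) (S : Multiset G), k * ℓ + max D (s - ℓ) ≤ card S →
      HasKDisjointZeroSum (k + 1) S
  | 0, S, hS => hD S (by omega)
  | k + 1, S, hS => by
    have hmax := le_max_right D (s - ℓ)
    have hℓ : (k + 1) * ℓ = k * ℓ + ℓ := by ring
    obtain ⟨T, hTS, hT0, hTsum, hTcard⟩ := hs S (by omega)
    refine HasKDisjointZeroSum.add_one hTS ⟨hT0, hTsum⟩
      (hasKDisjointZeroSum_add_one_of_card_le hD hs k (S - T) ?_)
    rw [card_sub hTS]
    omega

section Finite

variable {G : Type*} [AddCommGroup G] [Fintype G]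

theorem exists_short_zeroSum_of_card_mul_lt {S : Multiset G}
    (h : Fintype.card G * (AddMonoid.exponent G - 1) < card S) :
    ∃ T ≤ S, T ≠ 0 ∧ T.sum = 0 ∧ card T ≤ AddMonoid.exponent G := by
  classical
  have hexp : 0 < AddMonoid.exponent G :=
    AddMonoid.ExponentExists.exponent_pos AddMonoid.ExponentExists.of_finite
  obtain ⟨g, hg⟩ := exists_lt_count_of_card_mul_lt h
  refine ⟨replicate (AddMonoid.exponent G) g, le_count_iff_replicate_le.mp (by omega), ?_,
    by simp [AddMonoid.exponent_nsmul_eq_zero], by simp⟩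
  simpa [← card_eq_zero] using hexp.ne'

theorem hasKDisjointZeroSum_one_of_Dk_one_le {S : Multiset G} (h : Dk G 1 ≤ card S) :
    HasKDisjointZeroSum 1 S := by
  refine Nat.sInf_mem (s := {m | ∀ S : Multiset G, m ≤ card S → HasKDisjointZeroSum 1 S})
    ⟨Fintype.card G * (AddMonoid.exponent G - 1) + 1, fun S hS => ?_⟩ S h
  obtain ⟨T, hTS, hT0, hTsum, -⟩ := exists_short_zeroSum_of_card_mul_lt hS
  exact ⟨{T}, by simp, by simpa [IsZeroSumSeq] using ⟨hT0, hTsum⟩, by simpa using hTS⟩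

theorem exists_short_zeroSum_of_sleN_le {ℓ : ℕ} (hℓ : AddMonoid.exponent G ≤ ℓ)
    {S : Multiset G} (h : sleN G ℓ ≤ card S) :
    ∃ T ≤ S, T ≠ 0 ∧ T.sum = 0 ∧ card T ≤ ℓ := by
  refine Nat.sInf_mem (s := {m | ∀ S : Multiset G, m ≤ card S →
      ∃ T ≤ S, T ≠ 0 ∧ T.sum = 0 ∧ card T ≤ ℓ})
    ⟨Fintype.card G * (AddMonoid.exponent G - 1) + 1, fun S hS => ?_⟩ S h
  obtain ⟨T, hTS, hT0, hTsum, hTcard⟩ := exists_short_zeroSum_of_card_mul_lt hS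
  exact ⟨T, hTS, hT0, hTsum, hTcard.trans hℓ⟩

theorem Dk_add_one_le {ℓ : ℕ} (hℓ : AddMonoid.exponent G ≤ ℓ) (k : ℕ) :
    Dk G (k + 1) ≤ k * ℓ + max (Dk G 1) (sleN G ℓ - ℓ) := by
  classical
  exact Nat.sInf_le fun S hS =>
    hasKDisjointZeroSum_add_one_of_card_le (fun _ => hasKDisjointZeroSum_one_of_Dk_one_le)
      (fun _ => exists_short_zeroSum_of_sleN_le hℓ) k S hS

end Finite

theorem statement6_general {G : Type*} [AddCommGroup G] [Fintype G] (k ℓ : ℕ)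
    (hk : 1 ≤ k) (hℓ₁ : AddMonoid.exponent G ≤ ℓ) :
    Dk G k ≤ (k - 1) * ℓ + max (Dk G 1) (sleN G ℓ - ℓ) ∧
    Dk G k ≤ (k - 1) * AddMonoid.exponent G +
      max (Dk G 1) (etaC G - AddMonoid.exponent G) := by
  obtain ⟨k, rfl⟩ : ∃ k', k = k' + 1 := ⟨k - 1, by omega⟩
  simpa using ⟨Dk_add_one_le hℓ₁ k, Dk_add_one_le le_rfl k⟩

theorem statement6 {G : Type*} [AddCommGroup G] [Fintype G] (k ℓ : ℕ)
    (hk : 1 ≤ k) (hℓ₁ : AddMonoid.exponent G ≤ ℓ) (hℓ₂ : ℓ + 1 ≤ Dk G 1) :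
    Dk G k ≤ (k - 1) * ℓ + max (Dk G 1) (sleN G ℓ - ℓ) ∧
    Dk G k ≤ (k - 1) * AddMonoid.exponent G +
      max (Dk G 1) (etaC G - AddMonoid.exponent G) :=
  statement6_general k ℓ hk hℓ₁
end

section
/- Let G be a finite abelian group and n ≥ 1. Set m = max{⌊⌊D(G ⊕ C_n)/n⌋·n/2⌋, ⌊D(G)/n⌋·n}. Then s_{≤m}(G) ≤ D(G ⊕ C_n), i.e., every sequence over G of length at least D(G ⊕ C_n) contains a nonempty zero-sum subsequence of length at most m. -/
open Multiset

/-! Lift a sequence `S` over `G` to `G × C_n` by `g ↦ (g, 1)`. A zero-sum subsequence of the lift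
of length at most `D(G ⊕ C_n)` has length divisible by `n`, and projects to a zero-sum subsequence
`T` of `S`. If `T` is a minimal zero-sum sequence over `G`, then `|T| ≤ D(G)`; otherwise `T` splits
into two nonempty zero-sum sequences, the shorter of which has length at most `|T| / 2`. Since `n`
divides `|T|`, the bounds improve to `⌊D(G)/n⌋·n` and `⌊D(G ⊕ C_n)/n⌋·n / 2` respectively. -/

section ZeroSum

variable {H : Type*} [AddCommGroup H]

/-- Pigeonhole on the prefix sums of `S`. -/
lemma exists_zero_sum_le_of_card_le [Fintype H] (S : Multiset H)
    (hS : Fintype.card H ≤ Multiset.card S) : ∃ T ≤ S, T ≠ 0 ∧ T.sum = 0 := by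
  set L := S.toList
  have hL : L.length = Multiset.card S := Multiset.length_toList S
  obtain ⟨i, j, hsum, hij⟩ : ∃ i j : Fin (Fintype.card H + 1), (L.take i).sum = (L.take j).sum ∧
      i ≠ j :=
    Function.not_injective_iff.mp fun hinj => by
      simpa using Fintype.card_le_of_injective _ hinj
  wlog hlt : i < j generalizing i j
  · exact this j i hsum.symm hij.symm (lt_of_le_of_ne (not_lt.mp hlt) hij.symm)
  set M := (L.take j).drop i
  have hsplit : L.take j = L.take i ++ M := by
    rw [← List.take_append_drop i (L.take j), List.take_take, min_eq_left (Fin.le_iff_val_le_val.mp hlt.le)]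
  refine ⟨M, ?_, ?_, ?_⟩
  · calc (M : Multiset H) ≤ L := Multiset.coe_le.mpr
          ((List.drop_sublist _ _).trans (List.take_sublist _ _)).subperm
      _ = S := Multiset.coe_toList S
  · have : i < M.length + i := by
      simp only [M, List.length_drop, List.length_take, hL]
      have := j.isLt
      omega
    simpa [← List.length_pos_iff] using this
  · simpa [hsplit] using hsum

lemma exists_zero_sum_le_of_Dk_one_le [Fintype H] (S : Multiset H)
    (hS : Dk H 1 ≤ Multiset.card S) : ∃ T ≤ S, T ≠ 0 ∧ T.sum = 0 := by
  have hmem : Dk H 1 ∈ { ℓ : ℕ | ∀ S : Multiset H, ℓ ≤ Multiset.card S →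
      HasKDisjointZeroSum 1 S } := by
    refine Nat.sInf_mem ⟨Fintype.card H, fun S hS => ?_⟩
    obtain ⟨T, hTS, hT0, hTsum⟩ := exists_zero_sum_le_of_card_le S hS
    exact ⟨{T}, rfl, by simpa [IsZeroSumSeq] using ⟨hT0, hTsum⟩, by simpa using hTS⟩
  obtain ⟨T, hT1, hzero, hTS⟩ := hmem S hS
  obtain ⟨A, rfl⟩ := Multiset.card_eq_one.mp hT1
  obtain ⟨hA0, hAsum⟩ := hzero A (Multiset.mem_singleton_self A)
  exact ⟨A, by simpa using hTS, hA0, hAsum⟩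

lemma exists_isMinZeroSum_le {A : Multiset H} (hA0 : A ≠ 0) (hAsum : A.sum = 0) :
    ∃ U ≤ A, IsMinZeroSum U := by
  induction A using Multiset.strongInductionOn with
  | ih A ih =>
    by_cases hmin : ∀ T ≤ A, T ≠ 0 → T.sum = 0 → T = A
    · exact ⟨A, le_rfl, hA0, hAsum, hmin⟩
    · push Not at hmin
      obtain ⟨T, hTA, hT0, hTsum, hTne⟩ := hmin
      obtain ⟨U, hUT, hU⟩ := ih T (lt_of_le_of_ne hTA hTne) hT0 hTsum
      exact ⟨U, hUT.trans hTA, hU⟩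

/-- Removing one term of a minimal zero-sum sequence leaves a zero-sum free sequence. -/
lemma IsMinZeroSum.card_le_Dk_one [Fintype H] {U : Multiset H} (hU : IsMinZeroSum U) :
    Multiset.card U ≤ Dk H 1 := by
  classical
  obtain ⟨hU0, -, hUmin⟩ := hU
  obtain ⟨a, ha⟩ := Multiset.exists_mem_of_ne_zero hU0
  by_contra! hlt
  have hcard : Multiset.card (U.erase a) = Multiset.card U - 1 := Multiset.card_erase_of_mem ha
  obtain ⟨V, hV, hV0, hVsum⟩ := exists_zero_sum_le_of_Dk_one_le (U.erase a) (by omega)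
  obtain rfl : V = U := hUmin V (hV.trans (Multiset.erase_le a U)) hV0 hVsum
  have := Multiset.card_le_card hV
  omega

lemma exists_zero_sum_le_card_div_two_of_not_isMinZeroSum {T : Multiset H} (hT0 : T ≠ 0)
    (hTsum : T.sum = 0) (hT : ¬IsMinZeroSum T) :
    ∃ U ≤ T, U ≠ 0 ∧ U.sum = 0 ∧ Multiset.card U ≤ Multiset.card T / 2 := by
  classical
  simp only [IsMinZeroSum, hT0, hTsum, ne_eq, not_false_eq_true, true_and, not_forall] at hT
  obtain ⟨V, hVT, hV0, hVsum, hVne⟩ := hT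
  have hsplit : V + (T - V) = T := add_tsub_cancel_of_le hVT
  have hWsum : (T - V).sum = 0 := by
    simpa [hVsum, hTsum] using congrArg Multiset.sum hsplit
  have hW0 : T - V ≠ 0 := fun h => hVne (by simpa [h] using hsplit)
  have hcard : Multiset.card V + Multiset.card (T - V) = Multiset.card T := by
    rw [← Multiset.card_add, hsplit]
  by_cases hV : Multiset.card V ≤ Multiset.card T / 2
  · exact ⟨V, hVT, hV0, hVsum, hV⟩
  · exact ⟨T - V, Multiset.sub_le_self T V, hW0, hWsum, by omega⟩

end ZeroSum

lemma exists_zero_sum_le_of_Dk_prod_zmod_le {G : Type*} [AddCommGroup G] [Fintype G] (n : ℕ)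
    [NeZero n] (S : Multiset G) (hS : Dk (G × ZMod n) 1 ≤ Multiset.card S) :
    ∃ T ≤ S, T ≠ 0 ∧ T.sum = 0 ∧ n ∣ Multiset.card T ∧
      Multiset.card T ≤ Dk (G × ZMod n) 1 := by
  set S' := S.map fun g => (g, (1 : ZMod n))
  obtain ⟨A, hAS', hA0, hAsum⟩ := exists_zero_sum_le_of_Dk_one_le S' (by simpa [S'] using hS)
  obtain ⟨U, hUA, hU⟩ := exists_isMinZeroSum_le hA0 hAsum
  have hUS' : U ≤ S' := hUA.trans hAS'
  have hUsum : U.sum = 0 := hU.2.1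
  have hsnd : U.map Prod.snd = Multiset.replicate (Multiset.card U) 1 := by
    obtain ⟨k, -, hk⟩ := Multiset.le_replicate_iff.mp
      (by simpa [S', Multiset.map_map] using Multiset.map_le_map (f := Prod.snd) hUS')
    have hcard := congrArg Multiset.card hk
    rw [Multiset.card_map, Multiset.card_replicate] at hcard
    rw [hk, hcard]
  refine ⟨U.map Prod.fst, ?_, by simpa using hU.1, ?_, ?_, by simpa using hU.card_le_Dk_one⟩
  · simpa [S', Multiset.map_map] using Multiset.map_le_map (f := Prod.fst) hUS'
  · simpa [hUsum] using (map_multiset_sum (AddMonoidHom.fst G (ZMod n)) U).symm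
  · have h := map_multiset_sum (AddMonoidHom.snd G (ZMod n)) U
    simp only [AddMonoidHom.coe_snd, hUsum, Prod.snd_zero, hsnd, Multiset.sum_replicate,
      nsmul_one] at h
    simpa using (ZMod.natCast_eq_zero_iff _ _).mp h.symm

lemma Nat.le_div_mul_of_dvd_of_le {a b n : ℕ} (hn : n ∣ a) (hab : a ≤ b) : a ≤ b / n * n :=
  calc a = a / n * n := (Nat.div_mul_cancel hn).symm
    _ ≤ b / n * n := Nat.mul_le_mul_right n (Nat.div_le_div_right hab)

theorem statement7 {G : Type*} [AddCommGroup G] [Fintype G] (n : ℕ) [NeZero n] :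
    ∀ S : Multiset G, Dk (G × ZMod n) 1 ≤ Multiset.card S →
      ∃ T ≤ S, T ≠ 0 ∧ T.sum = 0 ∧
        Multiset.card T ≤
          max (Dk (G × ZMod n) 1 / n * n / 2) (Dk G 1 / n * n) := by
  intro S hS
  obtain ⟨T, hTS, hT0, hTsum, hnT, hTD⟩ := exists_zero_sum_le_of_Dk_prod_zmod_le n S hS
  by_cases hT : IsMinZeroSum T
  · exact ⟨T, hTS, hT0, hTsum,
      le_max_of_le_right (Nat.le_div_mul_of_dvd_of_le hnT hT.card_le_Dk_one)⟩
  · obtain ⟨U, hUT, hU0, hUsum, hUT2⟩ :=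
      exists_zero_sum_le_card_div_two_of_not_isMinZeroSum hT0 hTsum hT
    exact ⟨U, hUT.trans hTS, hU0, hUsum, le_max_of_le_left
      (hUT2.trans (Nat.div_le_div_right (Nat.le_div_mul_of_dvd_of_le hnT hTD)))⟩
end

section
/- Let r ≥ 1 and m ≥ 2. Then s_{≤2m}(C_2^r) ≤ (m−1) + (m!·2^r)^{1/m}, i.e., every sequence over C_2^r of length at least (m−1) + (m!·2^r)^{1/m} contains a nonempty zero-sum subsequence of length at most 2m. -/
open Multiset

lemma numBound (r m n : ℕ) (hm : 2 ≤ m)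
    (h : ((m : ℝ) - 1) + ((m.factorial * 2 ^ r : ℕ) : ℝ) ^ ((1 : ℝ) / m) ≤ n) :
    2 ^ r ≤ n.choose m := by
  set K : ℕ := m.factorial * 2 ^ r with hK
  have hK1 : 1 ≤ K := Nat.one_le_iff_ne_zero.mpr (by positivity)
  have hKR : (1 : ℝ) ≤ (K : ℝ) := by exact_mod_cast hK1
  have hmR : (0 : ℝ) < m := by positivity
  have hx1 : (1 : ℝ) ≤ (K : ℝ) ^ ((1 : ℝ) / m) :=
    Real.one_le_rpow hKR (by positivity)
  have hmn : m ≤ n := by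
    have : (m : ℝ) ≤ n := by linarith
    exact_mod_cast this
  have hcast : ((n + 1 - m : ℕ) : ℝ) = (n : ℝ) + 1 - m := by
    have : m ≤ n + 1 := hmn.trans (Nat.le_succ n)
    push_cast [Nat.cast_sub this]
    ring
  have hle : (K : ℝ) ^ ((1 : ℝ) / m) ≤ ((n + 1 - m : ℕ) : ℝ) := by
    rw [hcast]; linarith
  have hpow : (K : ℝ) ≤ ((n + 1 - m : ℕ) : ℝ) ^ m := by
    calc (K : ℝ) = ((K : ℝ) ^ ((1 : ℝ) / m)) ^ m := by
          rw [one_div]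
          rw [Real.rpow_inv_natCast_pow (by positivity) (by omega)]
      _ ≤ ((n + 1 - m : ℕ) : ℝ) ^ m :=
          pow_le_pow_left₀ (by linarith) hle m
  have hnat : K ≤ (n + 1 - m) ^ m := by exact_mod_cast hpow
  have hdesc : (n + 1 - m) ^ m ≤ n.descFactorial m := Nat.pow_sub_le_descFactorial n m
  have := hnat.trans hdesc
  rw [Nat.descFactorial_eq_factorial_mul_choose, hK] at this
  exact Nat.le_of_mul_le_mul_left this (Nat.factorial_pos m)

lemma keyAddSelf (x : Fin r → ZMod 2) : x + x = 0 := by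
  funext i
  simp only [Pi.add_apply, Pi.zero_apply]
  exact CharTwo.add_self_eq_zero (x i)

theorem statement14 (r m : ℕ) (hr : 1 ≤ r) (hm : 2 ≤ m) :
    ∀ S : Multiset (Fin r → ZMod 2),
      ((m : ℝ) - 1) + ((m.factorial * 2 ^ r : ℕ) : ℝ) ^ ((1 : ℝ) / m) ≤
        (Multiset.card S : ℝ) →
      ∃ T ≤ S, T ≠ 0 ∧ T.sum = 0 ∧ Multiset.card T ≤ 2 * m := by
  intro S hS
  by_cases hnd : S.Nodup
  swap
  · -- there is a repeated element
    rw [Multiset.nodup_iff_count_le_one] at hnd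
    push_neg at hnd
    obtain ⟨a, ha⟩ := hnd
    have ha2 : 2 ≤ S.count a := ha
    refine ⟨{a, a}, ?_, by simp, ?_, ?_⟩
    · rw [Multiset.le_iff_count]
      intro b
      by_cases hb : b = a
      · subst hb
        simpa using ha2
      · simp [Multiset.count_cons, hb]
    · simp [keyAddSelf]
    · simp; omega
  -- S is squarefree
  classical
  set n : ℕ := Multiset.card S with hn
  have hcardF : S.toFinset.card = n := Multiset.toFinset_card_of_nodup hnd
  have hchoose : 2 ^ r ≤ n.choose m := numBound r m n hm hS
  set F : Finset (Finset (Fin r → ZMod 2)) := Finset.powersetCard m S.toFinset with hF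
  have hFcard : F.card = n.choose m := by
    rw [hF, Finset.card_powersetCard, hcardF]
  have hcardG : Fintype.card (Fin r → ZMod 2) = 2 ^ r := by
    simp [Fintype.card_fun]
  -- helper to produce the conclusion from a suitable finset
  have mkT : ∀ D : Finset (Fin r → ZMod 2), D ⊆ S.toFinset → D ≠ ∅ →
      D.sum id = 0 → D.card ≤ 2 * m →
      ∃ T ≤ S, T ≠ 0 ∧ T.sum = 0 ∧ Multiset.card T ≤ 2 * m := by
    intro D hsub hne hsum hcard
    refine ⟨D.val, ?_, ?_, ?_, ?_⟩
    · have h1 : D.val ≤ S.toFinset.val := Finset.val_le_iff.mpr hsub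
      rwa [Multiset.toFinset_val, Multiset.Nodup.dedup hnd] at h1
    · intro hcon; exact hne (Finset.val_eq_zero.mp hcon)
    · have : D.sum id = D.val.sum := by
        show (D.val.map id).sum = D.val.sum
        rw [Multiset.map_id]
      rw [← this, hsum]
    · exact hcard
  by_cases hcoll : ∃ A ∈ F, ∃ B ∈ F, A ≠ B ∧ A.sum id = B.sum id
  · -- collision: symmetric difference is zero-sum of length ≤ 2m
    obtain ⟨A, hA, B, hB, hAB, hsum⟩ := hcoll
    rw [hF, Finset.mem_powersetCard] at hA hB
    set D : Finset (Fin r → ZMod 2) := (A \ B) ∪ (B \ A) with hD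
    have hdisj : Disjoint (A \ B) (B \ A) :=
      disjoint_sdiff_sdiff
    have hsumD : D.sum id = 0 := by
      have h1 : (A ∩ B).sum id + (A \ B).sum id = A.sum id :=
        Finset.sum_inter_add_sum_sdiff A B id
      have h2 : (B ∩ A).sum id + (B \ A).sum id = B.sum id :=
        Finset.sum_inter_add_sum_sdiff B A id
      have hBA : B ∩ A = A ∩ B := Finset.inter_comm B A
      rw [hBA] at h2
      have hDsum : D.sum id = (A \ B).sum id + (B \ A).sum id := by
        rw [hD, Finset.sum_union hdisj]
      have hself : (A ∩ B).sum id + (A ∩ B).sum id = 0 := keyAddSelf _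
      have : D.sum id + ((A ∩ B).sum id + (A ∩ B).sum id) = A.sum id + B.sum id := by
        rw [hDsum]; rw [← h1, ← h2]; abel
      rw [hself, add_zero] at this
      rw [this, hsum, keyAddSelf]
    have hne : D ≠ ∅ := by
      intro hcon
      rw [hD, Finset.union_eq_empty] at hcon
      exact hAB (Finset.Subset.antisymm
        (Finset.sdiff_eq_empty_iff_subset.mp hcon.1)
        (Finset.sdiff_eq_empty_iff_subset.mp hcon.2))
    have hsub : D ⊆ S.toFinset := by
      rw [hD]
      exact Finset.union_subset
        ((Finset.sdiff_subset).trans hA.1) ((Finset.sdiff_subset).trans hB.1)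
    have hcard : D.card ≤ 2 * m := by
      calc D.card ≤ (A \ B).card + (B \ A).card := Finset.card_union_le _ _
        _ ≤ A.card + B.card :=
            Nat.add_le_add (Finset.card_le_card Finset.sdiff_subset)
              (Finset.card_le_card Finset.sdiff_subset)
        _ = 2 * m := by rw [hA.2, hB.2]; ring
    exact mkT D hsub hne hsumD hcard
  · -- no collision: sums are injective, so some m-subset sums to zero
    push_neg at hcoll
    have hinj : Set.InjOn (fun A : Finset (Fin r → ZMod 2) => A.sum id) F := by
      intro A hA B hB h
      by_contra hne
      exact hcoll A hA B hB hne h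
    by_cases hzero : ∃ A ∈ F, A.sum id = 0
    · obtain ⟨A, hA, hsumA⟩ := hzero
      rw [hF, Finset.mem_powersetCard] at hA
      refine mkT A hA.1 ?_ hsumA (by rw [hA.2]; omega)
      intro hcon
      rw [hcon] at hA
      simp at hA
      omega
    · exfalso
      push_neg at hzero
      have himg : F.image (fun A => A.sum id) ⊆ Finset.univ.erase 0 := by
        intro g hg
        rw [Finset.mem_image] at hg
        obtain ⟨A, hA, rfl⟩ := hg
        exact Finset.mem_erase.mpr ⟨hzero A hA, Finset.mem_univ _⟩
      have h1 : F.card = (F.image (fun A => A.sum id)).card :=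
        (Finset.card_image_of_injOn hinj).symm
      have h2 : (F.image (fun A => A.sum id)).card ≤ 2 ^ r - 1 := by
        have := Finset.card_le_card himg
        rwa [Finset.card_erase_of_mem (Finset.mem_univ _), Finset.card_univ, hcardG] at this
      have h3 : 2 ^ r ≤ F.card := by rw [hFcard]; exact hchoose
      have : 1 ≤ 2 ^ r := Nat.one_le_two_pow
      omega
end

section
/- For every r ≥ 2 there exists a bijection φ: C_2^r → C_2^r such that the map g ↦ g + φ(g) is also a bijection of C_2^r (equivalently, {g + φ(g) : g ∈ C_2^r} = C_2^r). -/
open Multiset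

theorem statement15 (r : ℕ) (hr : 2 ≤ r) :
    ∃ φ : (Fin r → ZMod 2) → (Fin r → ZMod 2),
      Function.Bijective φ ∧ Function.Bijective (fun g => g + φ g) := by
  have h0 : 0 < r := by omega
  have h1 : 1 < r := by omega
  refine ⟨fun g i => if h : (i : ℕ) + 1 < r then g ⟨(i : ℕ) + 1, h⟩
      else g ⟨0, h0⟩ + g ⟨1, h1⟩, ?_, ?_⟩
  · rw [← Finite.injective_iff_bijective]
    intro g h hgh
    have key : ∀ i : Fin r, 1 ≤ (i : ℕ) → g i = h i := by
      intro i hi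
      have hj : ((⟨(i : ℕ) - 1, by omega⟩ : Fin r) : ℕ) + 1 < r := by
        show (i : ℕ) - 1 + 1 < r; omega
      have hc := congrFun hgh ⟨(i : ℕ) - 1, by omega⟩
      simp only [dif_pos hj] at hc
      have he : (⟨((⟨(i : ℕ) - 1, by omega⟩ : Fin r) : ℕ) + 1, hj⟩ : Fin r) = i :=
        Fin.ext (by show (i : ℕ) - 1 + 1 = (i : ℕ); omega)
      rwa [he] at hc
    funext i
    by_cases hi : 1 ≤ (i : ℕ)
    · exact key i hi
    · have hi0 : i = ⟨0, h0⟩ := Fin.ext (by show (i : ℕ) = 0; omega)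
      have hL : ¬ ((⟨r - 1, by omega⟩ : Fin r) : ℕ) + 1 < r := by
        show ¬ (r - 1 + 1 < r); omega
      have hc := congrFun hgh ⟨r - 1, by omega⟩
      simp only [dif_neg hL] at hc
      rw [key ⟨1, h1⟩ (by norm_num)] at hc
      rw [hi0]
      have hcancel : ∀ a b c : ZMod 2, a + b = c + b → a = c := by decide
      exact hcancel _ _ _ hc
  · rw [← Finite.injective_iff_bijective]
    intro g h hgh
    have key : ∀ n (hn : n < r), g ⟨n, hn⟩ + h ⟨n, hn⟩ = g ⟨0, h0⟩ + h ⟨0, h0⟩ := by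
      intro n
      induction n with
      | zero => intro hn; rfl
      | succ m ih =>
        intro hn
        have hm : m < r := by omega
        have hp : ((⟨m, hm⟩ : Fin r) : ℕ) + 1 < r := by show m + 1 < r; exact hn
        have hc := congrFun hgh ⟨m, hm⟩
        simp only [Pi.add_apply, dif_pos hp] at hc
        have he : (⟨((⟨m, hm⟩ : Fin r) : ℕ) + 1, hp⟩ : Fin r) = ⟨m + 1, hn⟩ := rfl
        rw [he] at hc
        have step : ∀ a b c d : ZMod 2, a + b = c + d → b + d = a + c := by decide
        rw [step _ _ _ _ hc, ih hm]
    have hL : ¬ ((⟨r - 1, by omega⟩ : Fin r) : ℕ) + 1 < r := by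
      show ¬ (r - 1 + 1 < r); omega
    have last := congrFun hgh ⟨r - 1, by omega⟩
    simp only [Pi.add_apply, dif_neg hL] at last
    have e1 : g ⟨r - 1, by omega⟩ + h ⟨r - 1, by omega⟩ = g ⟨0, h0⟩ + h ⟨0, h0⟩ :=
      key (r - 1) (by omega)
    have e2 : g ⟨1, h1⟩ + h ⟨1, h1⟩ = g ⟨0, h0⟩ + h ⟨0, h0⟩ := key 1 h1
    have final : ∀ a b c d e f : ZMod 2,
        a + (c + e) = b + (d + f) → a + b = c + d → e + f = c + d → c = d := by decide
    have step2 : ∀ a b c d : ZMod 2, a + b = c + d → b + d = a + c := by decide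
    have hd0 : g ⟨0, h0⟩ = h ⟨0, h0⟩ :=
      final _ _ _ _ _ _ last e1 e2
    funext i
    have hk := key (i : ℕ) i.isLt
    have hfin : ∀ a b c d : ZMod 2, a + b = c + d → c = d → a = b := by decide
    have hi' : (⟨(i : ℕ), i.isLt⟩ : Fin r) = i := Fin.ext rfl
    rw [hi'] at hk
    exact hfin _ _ _ _ hk hd0
end

section
/- Let r ≥ 2 and let B be the squarefree zero-sum sequence over C_2^r whose support is exactly C_2^r \ {0} (each nonzero element occurring exactly once). Then the maximal number of factors in a factorization of B into minimal zero-sum sequences equals ⌊(2^r − 1)/3⌋. -/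
open Multiset

/-!
A minimal zero-sum sequence dividing the squarefree sequence of nonzero elements of an
elementary abelian 2-group has length at least 3 (a single element would be `0`, a pair `x, x`
repeats an element), which bounds every factorization length by `⌊(2^r - 1)/3⌋`.

Factorizations attaining the bound are built from ranks 2 and 3 by passing from `G` to
`G × C₂²`. The nonzero elements of `G × C₂²` are the `(g, 0)` with `g ≠ 0`, factored as in
`G`, and the `(v, k)` with `k ≠ 0`, which split into the `|G|` triples
`{(v, a), (σ v, b), (v + σ v, a + b)}` as soon as both `σ` and `v ↦ v + σ v` are bijections
of `G`; such a `σ` is multiplication by any `c ∉ {0, 1}` in `𝔽_{2^r}`. Since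
`(|G| - 1)/3 + |G| = (4|G| - 1)/3`, the bound is attained again.
-/

open Function

lemma Multiset.exists_le_map_eq {α β : Type*} [Nonempty α] {f : α → β} (hf : Injective f)
    {S : Multiset α} {T : Multiset β} (hT : T ≤ S.map f) : ∃ T' ≤ S, T'.map f = T := by
  classical
  have hT' : (T.map (invFun f)).map f = T := by
    rw [map_map]
    refine (map_congr rfl fun y hy => ?_).trans (map_id T)
    obtain ⟨x, -, rfl⟩ := mem_map.1 (mem_of_le hT hy)
    exact invFun_eq ⟨x, rfl⟩
  refine ⟨T.map (invFun f), ?_, hT'⟩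
  rwa [← map_le_map_iff hf, hT']

lemma Multiset.product_singleton_right {α β : Type*} (s : Multiset α) (b : β) :
    s ×ˢ {b} = s.map (·, b) := by
  simp [SProd.sprod, Multiset.product, bind_singleton]

variable {G H : Type*} [AddCommGroup G] [AddCommGroup H]

def nonzeroSeq (G : Type*) [AddCommGroup G] [Fintype G] [DecidableEq G] : Multiset G :=
  (Finset.univ.erase 0).val

section nonzeroSeq

variable [Fintype G] [DecidableEq G]

@[simp]
lemma mem_nonzeroSeq {x : G} : x ∈ nonzeroSeq G ↔ x ≠ 0 := by
  change x ∈ Finset.univ.erase 0 ↔ _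
  simp

lemma nodup_nonzeroSeq : (nonzeroSeq G).Nodup := (Finset.univ.erase 0).nodup

lemma card_nonzeroSeq : card (nonzeroSeq G) = Fintype.card G - 1 :=
  Finset.card_erase_of_mem (Finset.mem_univ 0)

variable [Fintype H] [DecidableEq H]

lemma map_nonzeroSeq {e : G → H} (he : Bijective e) (h0 : e 0 = 0) :
    (nonzeroSeq G).map e = nonzeroSeq H := by
  refine (Nodup.ext (nodup_nonzeroSeq.map he.1) nodup_nonzeroSeq).2 fun y => ?_
  obtain ⟨x, rfl⟩ := he.2 y
  simp [he.1.eq_iff, ← h0]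

lemma nonzeroSeq_prod :
    nonzeroSeq (G × H) =
      nonzeroSeq G ×ˢ {0} + (Finset.univ : Finset G).val ×ˢ nonzeroSeq H := by
  refine (Nodup.ext nodup_nonzeroSeq (nodup_add.2 ⟨nodup_nonzeroSeq.product (nodup_singleton 0),
    Finset.univ.nodup.product nodup_nonzeroSeq, ?_⟩)).2 fun ⟨g, h⟩ => ?_
  · simp +contextual [Multiset.disjoint_left]
  · simp only [mem_nonzeroSeq, ne_eq, Prod.mk_eq_zero, mem_add, mem_product, mem_singleton,
      Finset.mem_val, Finset.mem_univ, true_and]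
    tauto

end nonzeroSeq

lemma isMinZeroSum_of_card_le_three {S : Multiset G} (hS : S ≠ 0) (h0 : (0 : G) ∉ S)
    (hsum : S.sum = 0) (hcard : card S ≤ 3) : IsMinZeroSum S := by
  refine ⟨hS, hsum, fun T hTS hT hTsum => ?_⟩
  obtain ⟨U, rfl⟩ := Multiset.le_iff_exists_add.1 hTS
  by_contra hU
  replace hU : U ≠ 0 := by simpa using hU
  have hUsum : U.sum = 0 := by simpa [hTsum] using hsum
  -- of two disjoint nonempty zero-sum parts of length at most 3, one is a single element, `0`
  have card_ne_one : ∀ V ≤ T + U, V.sum = 0 → card V ≠ 1 := by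
    rintro V hV hVsum hV1
    obtain ⟨x, rfl⟩ := card_eq_one.1 hV1
    rw [sum_singleton] at hVsum
    exact h0 (hVsum ▸ mem_of_le hV (mem_singleton_self x))
  have := card_ne_one T hTS hTsum
  have := card_ne_one U (Multiset.le_add_left U T) hUsum
  have := card_pos.2 hT
  have := card_pos.2 hU
  rw [card_add] at hcard
  omega

lemma isMinZeroSum_triple (htwo : ∀ g : G, g + g = 0) {x y : G} (hx : x ≠ 0) (hy : y ≠ 0)
    (hxy : x + y ≠ 0) : IsMinZeroSum ({x, y, x + y} : Multiset G) :=
  isMinZeroSum_of_card_le_three (by simp) (by simp [hx.symm, hy.symm, hxy.symm])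
    (by simpa [← add_assoc] using htwo (x + y)) (by simp)

lemma IsMinZeroSum.map {S : Multiset G} (hS : IsMinZeroSum S) (f : G →+ H) (hf : Injective f) :
    IsMinZeroSum (S.map f) := by
  obtain ⟨hS0, hsum, hmin⟩ := hS
  refine ⟨by simpa using hS0, by rw [← map_multiset_sum, hsum, _root_.map_zero],
    fun T hT hT0 hTsum => ?_⟩
  obtain ⟨T', hT'S, rfl⟩ := exists_le_map_eq hf hT
  rw [hmin T' hT'S (by simpa using hT0) ((injective_iff_map_eq_zero f).1 hf _ <| by
    rwa [map_multiset_sum])]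

lemma IsFactorization.map [Fintype G] [DecidableEq G] [Fintype H] [DecidableEq H]
    {ζ : Multiset (Multiset G)} (hζ : IsFactorization ζ (nonzeroSeq G)) (e : G ≃+ H) :
    IsFactorization (ζ.map (Multiset.map e)) (nonzeroSeq H) := by
  refine ⟨?_, fun A hA => ?_⟩
  · rw [← map_nonzeroSeq e.bijective (map_zero e), ← hζ.1]
    exact (map_join _ ζ).symm
  · obtain ⟨B, hB, rfl⟩ := mem_map.1 hA
    exact (hζ.2 B hB).map e.toAddMonoidHom e.injective

section Elementary

variable [Fintype G] [DecidableEq G] (htwo : ∀ g : G, g + g = 0)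
include htwo

lemma three_le_card_of_le_nonzeroSeq {A : Multiset G} (hA : A ≤ nonzeroSeq G) (hA0 : A ≠ 0)
    (hsum : A.sum = 0) : 3 ≤ card A := by
  have h0 : (0 : G) ∉ A := fun h => by simpa using mem_of_le hA h
  have hcard1 : card A ≠ 1 := fun h => by
    obtain ⟨x, rfl⟩ := card_eq_one.1 h
    rw [sum_singleton] at hsum
    exact h0 (hsum ▸ mem_singleton_self x)
  have hcard2 : card A ≠ 2 := fun h => by
    obtain ⟨x, y, rfl⟩ := card_eq_two.1 h
    have hxy : x = y := by
      rw [← add_right_cancel_iff (a := y), htwo y]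
      simpa using hsum
    have := nodup_of_le hA nodup_nonzeroSeq
    simp_all
  have := card_pos.2 hA0
  omega

lemma card_le_of_isFactorization {ζ : Multiset (Multiset G)}
    (hζ : IsFactorization ζ (nonzeroSeq G)) : card ζ ≤ (Fintype.card G - 1) / 3 := by
  have hlen : ∀ A ∈ ζ, 3 ≤ card A := fun A hA =>
    three_le_card_of_le_nonzeroSeq htwo (hζ.1 ▸ le_sum_of_mem hA) (hζ.2 A hA).1 (hζ.2 A hA).2.1
  have : card ζ * 3 ≤ Fintype.card G - 1 := by
    calc card ζ * 3 = (ζ.map fun _ => 3).sum := by simp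
      _ ≤ (ζ.map card).sum := sum_map_le_sum_map _ _ hlen
      _ = card ζ.sum := (card_join ζ).symm
      _ = Fintype.card G - 1 := by rw [hζ.1, card_nonzeroSeq]
  omega

lemma exists_factorization_prod_klein {σ : G → G} (hσ : Bijective σ)
    (hσ' : Bijective fun v => v + σ v)
    {ζ : Multiset (Multiset G)} (hζ : IsFactorization ζ (nonzeroSeq G)) :
    ∃ ξ, IsFactorization ξ (nonzeroSeq (G × (Fin 2 → ZMod 2))) ∧
      card ξ = card ζ + Fintype.card G := by
  let a : Fin 2 → ZMod 2 := ![1, 0]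
  let b : Fin 2 → ZMod 2 := ![0, 1]
  have hK : nonzeroSeq (Fin 2 → ZMod 2) = {a, b, a + b} := by decide
  have hab : a ≠ 0 ∧ b ≠ 0 ∧ a + b ≠ 0 := by decide
  have hK2 : ∀ k : Fin 2 → ZMod 2, k + k = 0 := by decide
  let triple : G → Multiset (G × (Fin 2 → ZMod 2)) :=
    fun v => {(v, a), (σ v, b), (v, a) + (σ v, b)}
  have htriple : ∀ v, IsMinZeroSum (triple v) := fun v =>
    isMinZeroSum_triple (fun x => Prod.ext (htwo x.1) (hK2 x.2))
      (by simp [Prod.ext_iff, hab.1]) (by simp [Prod.ext_iff, hab.2.1])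
      (by simp [Prod.ext_iff, hab.2.2])
  refine ⟨ζ.map (map (AddMonoidHom.inl G _)) + (Finset.univ.val.map triple), ⟨?_, ?_⟩, ?_⟩
  · have hshift : ∀ {τ : G → G}, Bijective τ → ∀ k : Fin 2 → ZMod 2,
        Finset.univ.val.map (fun v => (τ v, k)) = Finset.univ.val.map (·, k) := fun hτ k => by
      simpa using congrArg (map (·, k)) (map_univ_val_equiv (Equiv.ofBijective _ hτ))
    have hinl : (ζ.map (map (AddMonoidHom.inl G (Fin 2 → ZMod 2)))).sum =
        (nonzeroSeq G).map (·, 0) := by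
      rw [← hζ.1]
      exact (map_join _ ζ).symm
    rw [sum_add, nonzeroSeq_prod, hK, hinl, product_singleton_right]
    congr 1
    change Finset.univ.val.bind triple = _
    simp only [triple, insert_eq_cons, bind_cons, bind_singleton, Prod.mk_add_mk,
      hshift hσ, hshift hσ', product_cons, product_singleton_right]
  · intro A hA
    rcases mem_add.1 hA with hA | hA
    · obtain ⟨B, hB, rfl⟩ := mem_map.1 hA
      exact (hζ.2 B hB).map _ (Prod.mk_left_injective 0)
    · obtain ⟨v, -, rfl⟩ := mem_map.1 hA
      exact htriple v
  · simp [Finset.card_univ]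

end Elementary

def Fin.appendAddEquiv (A : Type*) [Add A] (m n : ℕ) :
    (Fin m → A) × (Fin n → A) ≃+ (Fin (m + n) → A) where
  __ := Fin.appendEquiv m n
  map_add' x y := by
    ext i
    refine Fin.addCases (fun i => ?_) (fun i => ?_) i <;> simp

lemma exists_orthomorphism {n : ℕ} (hn : 2 ≤ n) :
    ∃ σ : (Fin n → ZMod 2) → (Fin n → ZMod 2),
      Bijective σ ∧ Bijective fun v => v + σ v := by
  classical
  let F := GaloisField 2 n
  have : Fintype F := Fintype.ofFinite F
  let e : F ≃ₗ[ZMod 2] (Fin n → ZMod 2) := LinearEquiv.ofFinrankEq _ _ <| by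
    rw [Module.finrank_fin_fun, GaloisField.finrank 2 (by omega)]
  obtain ⟨a, -, ha⟩ : ∃ a ∈ Finset.univ, a ∉ ({0, 1} : Finset F) := by
    refine Finset.exists_mem_notMem_of_card_lt_card ?_
    rw [Finset.card_univ, ← Nat.card_eq_fintype_card, GaloisField.card 2 n (by omega)]
    calc ({0, 1} : Finset F).card ≤ 2 := Finset.card_le_two
      _ < 2 ^ 2 := by norm_num
      _ ≤ 2 ^ n := Nat.pow_le_pow_right (by norm_num) hn
  simp only [Finset.mem_insert, Finset.mem_singleton, not_or] at ha
  have hmul : ∀ c : F, c ≠ 0 → Bijective (e ∘ (c * ·) ∘ e.symm) := fun c hc =>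
    e.bijective.comp ((mulLeft_bijective₀ c hc).comp e.symm.bijective)
  refine ⟨e ∘ (a * ·) ∘ e.symm, hmul a ha.1, ?_⟩
  convert hmul (1 + a) ?_ using 1
  · ext v : 1
    simp [add_mul]
  · intro h
    exact ha.2 (by linear_combination h - CharTwo.two_eq_zero (R := F))

lemma add_self_eq_zero_of_zmod_two {ι : Type*} (v : ι → ZMod 2) : v + v = 0 :=
  funext fun i => CharTwo.add_self_eq_zero (v i)

lemma exists_factorization_card_eq :
    ∀ n : ℕ, ∃ ζ, IsFactorization ζ (nonzeroSeq (Fin (n + 2) → ZMod 2)) ∧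
      card ζ = (2 ^ (n + 2) - 1) / 3
  | 0 => by
    refine ⟨{nonzeroSeq _}, ⟨sum_singleton _, fun A hA => ?_⟩, rfl⟩
    rw [mem_singleton.1 hA]
    exact isMinZeroSum_of_card_le_three (by decide) (by simp) (by decide) (by decide)
  | 1 => by
    refine ⟨{{![1, 0, 0], ![0, 1, 0], ![1, 1, 0]},
      {![0, 0, 1], ![1, 0, 1], ![0, 1, 1], ![1, 1, 1]}}, ⟨by decide, ?_⟩, rfl⟩
    simp only [insert_eq_cons, mem_cons, mem_singleton, forall_eq_or_imp, forall_eq]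
    refine ⟨isMinZeroSum_of_card_le_three (by decide) (by decide) (by decide) (by decide), ?_⟩
    simp only [IsMinZeroSum, ← mem_powerset]
    decide
  | n + 2 => by
    obtain ⟨ζ, hζ, hcard⟩ := exists_factorization_card_eq n
    obtain ⟨σ, hσ, hσ'⟩ := exists_orthomorphism (n := n + 2) (by omega)
    obtain ⟨ξ, hξ, hξcard⟩ :=
      exists_factorization_prod_klein add_self_eq_zero_of_zmod_two hσ hσ' hζ
    refine ⟨ξ.map (map (Fin.appendAddEquiv (ZMod 2) (n + 2) 2)), hξ.map _, ?_⟩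
    have : 1 ≤ 2 ^ (n + 2) := Nat.one_le_two_pow
    rw [card_map, hξcard, hcard, Fintype.card_fun, ZMod.card, Fintype.card_fin,
      pow_add 2 (n + 2)]
    omega

theorem statement16 (r : ℕ) (hr : 2 ≤ r) :
    maxL ((Finset.univ.erase (0 : Fin r → ZMod 2)).val) = (2 ^ r - 1) / 3 := by
  obtain ⟨n, rfl⟩ : ∃ n, r = n + 2 := ⟨r - 2, by omega⟩
  obtain ⟨ζ, hζ, hcard⟩ := exists_factorization_card_eq n
  refine IsGreatest.csSup_eq ⟨⟨ζ, hζ, hcard⟩, ?_⟩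
  rintro _ ⟨ξ, hξ, rfl⟩
  simpa using card_le_of_isFactorization add_self_eq_zero_of_zmod_two hξ
end

section
/- For every r ≥ 1, D_2(C_2^r) < (3r + 6)/2, i.e., every sequence over C_2^r of length at least ⌈(3r+6)/2⌉ contains two disjoint nonempty zero-sum subsequences. -/
open Multiset

/-!
Index a sequence `S` of length `n` over `G = 𝔽₂ʳ` and let `C ≤ 𝔽₂ⁿ` be the code of linear
relations among its terms, of dimension at least `n - r`; the supports of nonzero codewords are
zero-sum subsequences. Without two disjoint ones, any two nonzero codewords share a coordinate:
dually, the `n` coordinate functionals, as points of `V = C*`, are not covered by two hyperplanes.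

For such a multiset `T` of points, the points of `T` in a hyperplane `H = ker u` span `H` (a
functional vanishing on them but not on `H` would give two hyperplanes covering `T`), so some
functional `v` is nonzero on `dim V - 1` of them: `H` holds at least `dim V - 1` more points than
`ker u ⊓ ker v`. Take the codimension-two subspace `W` with the fewest points; the three
hyperplanes through `W` cover `T` once outside `W` and three times on `W`, so
`3 (dim V - 1) ≤ |T|`, i.e. `3 (n - r - 1) ≤ n`.
-/

open Module Submodule

theorem exists_dual_finrank_span_le_card_filter {K V : Type*} [Field K] [DecidableEq K]
    [AddCommGroup V] [Module K V] (P : Finset V) :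
    ∃ φ : Dual K V, finrank K (span K (P : Set V)) ≤ (P.filter (φ · ≠ 0)).card := by
  obtain ⟨t, htP, hspan, hli⟩ := exists_linearIndependent K (P : Set V)
  obtain ⟨t, rfl⟩ := ((P.finite_toSet).subset htP).exists_finset_coe
  replace hli : LinearIndepOn K id (t : Set V) := hli
  refine ⟨(Basis.extend hli).sumCoords, ?_⟩
  rw [← hspan, finrank_span_finset_eq_card hli]
  refine Finset.card_le_card fun x hx => Finset.mem_filter.mpr ⟨htP hx, ?_⟩
  have hx' : x ∈ hli.extend (Set.subset_univ _) := hli.subset_extend _ hx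
  have hbx : Basis.extend hli ⟨x, hx'⟩ = x := Basis.extend_apply_self hli _
  rw [← hbx, Basis.sumCoords_self_apply]
  exact one_ne_zero

section NotCoveredByTwoHyperplanes

variable {V : Type*} [AddCommGroup V] [Module (ZMod 2) V]

theorem countP_eq_zero_add_countP_eq_zero_add_countP_add_eq_zero (T : Multiset V)
    (u v : Dual (ZMod 2) V) :
    T.countP (u · = 0) + T.countP (v · = 0) + T.countP ((u + v) · = 0) =
      Multiset.card T + 2 * T.countP (fun x => u x = 0 ∧ v x = 0) := by
  induction T using Multiset.induction_on with
  | empty => simp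
  | cons x T ih =>
    have key : ∀ a b : ZMod 2, ((if a = 0 then 1 else 0) + (if b = 0 then 1 else 0) +
        (if a + b = 0 then 1 else 0) : ℕ) = 1 + 2 * (if a = 0 ∧ b = 0 then 1 else 0) := by
      decide
    have := key (u x) (v x)
    rw [← LinearMap.add_apply] at this
    simp only [Multiset.countP_cons, Multiset.card_cons]
    omega

def NotCoveredByTwoHyperplanes (T : Multiset V) : Prop :=
  ∀ u v : Dual (ZMod 2) V, u ≠ 0 → v ≠ 0 → ∃ x ∈ T, u x ≠ 0 ∧ v x ≠ 0

variable {T : Multiset V}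

theorem NotCoveredByTwoHyperplanes.span_toFinset_filter_eq_ker [DecidableEq V]
    (hT : NotCoveredByTwoHyperplanes T) (u : Dual (ZMod 2) V) :
    span (ZMod 2) ((T.filter (u · = 0)).toFinset : Set V) = LinearMap.ker u := by
  set U := span (ZMod 2) ((T.filter (u · = 0)).toFinset : Set V)
  have hU : U ≤ LinearMap.ker u := span_le.mpr fun x hx => by
    simpa using (Multiset.mem_filter.mp (Multiset.mem_toFinset.mp hx)).2
  refine le_antisymm hU fun y hy => ?_
  by_contra hyU
  obtain ⟨v, hvy, hvU⟩ := exists_dual_map_eq_bot_of_notMem hyU inferInstance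
  have huvy : (u + v) y ≠ 0 := by simpa [LinearMap.mem_ker.mp hy] using hvy
  obtain ⟨x, hxT, huvx, hvx⟩ :=
    hT (u + v) v (fun h => huvy (by simp [h])) (fun h => hvy (by simp [h]))
  have hux : u x = 0 := by
    have key : ∀ a b : ZMod 2, a + b ≠ 0 → b ≠ 0 → a = 0 := by decide
    exact key _ _ huvx hvx
  have hxU : x ∈ U := subset_span (by simp [hxT, hux])
  have hvx0 := mem_map_of_mem (f := v) hxU
  rw [hvU, mem_bot] at hvx0
  exact hvx hvx0

variable [FiniteDimensional (ZMod 2) V]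

theorem NotCoveredByTwoHyperplanes.exists_countP_add_finrank_le [DecidableEq V]
    (hT : NotCoveredByTwoHyperplanes T) (hV : 2 ≤ finrank (ZMod 2) V) (u : Dual (ZMod 2) V) :
    ∃ v : Dual (ZMod 2) V, v ≠ 0 ∧ u + v ≠ 0 ∧
      T.countP (fun x => u x = 0 ∧ v x = 0) + finrank (ZMod 2) V ≤ T.countP (u · = 0) + 1 := by
  set P := (T.filter (u · = 0)).toFinset
  obtain ⟨v, hv⟩ := exists_dual_finrank_span_le_card_filter (K := ZMod 2) P
  rw [hT.span_toFinset_filter_eq_ker] at hv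
  have hker : finrank (ZMod 2) V ≤ finrank (ZMod 2) (LinearMap.ker u) + 1 := by
    have hsum := u.finrank_range_add_finrank_ker
    have hrange := Submodule.finrank_le (LinearMap.range u)
    rw [finrank_self] at hrange
    omega
  obtain ⟨x, hx⟩ : (P.filter (v · ≠ 0)).Nonempty := by
    rw [← Finset.card_pos]; omega
  simp only [P, Finset.mem_filter, Multiset.mem_toFinset, Multiset.mem_filter] at hx
  obtain ⟨⟨-, hux⟩, hvx⟩ := hx
  refine ⟨v, fun h => hvx (by simp [h]), fun h => hvx (by simpa [hux] using congr($h x)), ?_⟩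
  have hsplit := Multiset.countP_eq_countP_filter_add T (u · = 0) (v · = 0)
  rw [Multiset.countP_filter, Multiset.countP_filter] at hsplit
  have hcard : (P.filter (v · ≠ 0)).card ≤ T.countP (fun x => u x = 0 ∧ ¬v x = 0) := by
    rw [Multiset.countP_eq_card_filter, ← Multiset.toFinset_filter]
    refine (Multiset.toFinset_card_le _).trans_eq ?_
    simp_rw [Multiset.filter_filter, ne_eq, and_comm]
  omega

theorem NotCoveredByTwoHyperplanes.three_mul_finrank_le (hT : NotCoveredByTwoHyperplanes T) :
    3 * finrank (ZMod 2) V ≤ Multiset.card T + 3 := by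
  classical
  by_cases hV : finrank (ZMod 2) V ≤ 1
  · omega
  push Not at hV
  have : Finite (Dual (ZMod 2) V) := Module.finite_of_finite (ZMod 2)
  have : Nontrivial (Dual (ZMod 2) V) :=
    Module.nontrivial_of_finrank_pos (R := ZMod 2) (by rw [Subspace.dual_finrank_eq]; omega)
  set pairs := {p : Dual (ZMod 2) V × Dual (ZMod 2) V | p.1 ≠ 0 ∧ p.2 ≠ 0 ∧ p.1 + p.2 ≠ 0}
  have hpairs : pairs.Nonempty := by
    obtain ⟨u, hu⟩ := exists_ne (0 : Dual (ZMod 2) V)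
    obtain ⟨v, hv, huv, -⟩ := hT.exists_countP_add_finrank_le hV u
    exact ⟨(u, v), hu, hv, huv⟩
  obtain ⟨⟨u, v⟩, ⟨hu, hv, huv⟩, hmin⟩ := pairs.exists_min_image
    (fun p => T.countP (fun x => p.1 x = 0 ∧ p.2 x = 0)) pairs.toFinite hpairs
  dsimp only at hmin
  have hbound : ∀ w : Dual (ZMod 2) V, w ≠ 0 →
      T.countP (fun x => u x = 0 ∧ v x = 0) + finrank (ZMod 2) V ≤ T.countP (w · = 0) + 1 := by
    intro w hw
    obtain ⟨w', hw', hww', hcount⟩ := hT.exists_countP_add_finrank_le hV w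
    have := hmin (w, w') ⟨hw, hw', hww'⟩
    dsimp only at this
    omega
  have hcover := countP_eq_zero_add_countP_eq_zero_add_countP_add_eq_zero T u v
  have hbu := hbound u hu
  have hbv := hbound v hv
  have hbuv := hbound (u + v) huv
  omega

end NotCoveredByTwoHyperplanes

theorem hasKDisjointZeroSum_two_of_disjoint {G ι : Type*} [AddCommGroup G] [Fintype ι]
    (f : ι → G) {s t : Finset ι} (hst : Disjoint s t) (hs : s.Nonempty) (ht : t.Nonempty)
    (hs0 : ∑ i ∈ s, f i = 0) (ht0 : ∑ i ∈ t, f i = 0) :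
    HasKDisjointZeroSum 2 (Finset.univ.val.map f) := by
  refine ⟨{s.val.map f, t.val.map f}, rfl, ?_, ?_⟩
  · simp only [Multiset.insert_eq_cons, Multiset.mem_cons, Multiset.mem_singleton]
    rintro A (rfl | rfl)
    · exact ⟨by simpa using hs.ne_empty, hs0⟩
    · exact ⟨by simpa using ht.ne_empty, ht0⟩
  · rw [Multiset.insert_eq_cons, Multiset.sum_cons, Multiset.sum_singleton, ← Multiset.map_add,
      ← Finset.disjUnion_val s t hst]
    exact Multiset.map_le_map (Finset.val_le_iff.mpr (Finset.subset_univ _))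

section Code

variable {G ι : Type*} [AddCommGroup G] [Module (ZMod 2) G] [Fintype ι]

theorem sum_filter_ne_zero_eq_linearCombination (f : ι → G) (c : ι → ZMod 2) :
    ∑ i ∈ Finset.univ.filter (c · ≠ 0), f i = Fintype.linearCombination (ZMod 2) f c := by
  rw [Fintype.linearCombination_apply, Finset.sum_filter]
  refine Finset.sum_congr rfl fun i _ => ?_
  rcases (by decide : ∀ a : ZMod 2, a = 0 ∨ a = 1) (c i) with h | h <;> simp [h]

theorem exists_ne_zero_ne_zero_of_not_hasKDisjointZeroSum_two (f : ι → G)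
    (hf : ¬HasKDisjointZeroSum 2 (Finset.univ.val.map f)) {c c' : ι → ZMod 2}
    (hc : c ∈ LinearMap.ker (Fintype.linearCombination (ZMod 2) f))
    (hc' : c' ∈ LinearMap.ker (Fintype.linearCombination (ZMod 2) f)) (hc0 : c ≠ 0)
    (hc'0 : c' ≠ 0) : ∃ i, c i ≠ 0 ∧ c' i ≠ 0 := by
  by_contra! hdisj
  refine hf (hasKDisjointZeroSum_two_of_disjoint f (s := Finset.univ.filter (c · ≠ 0))
    (t := Finset.univ.filter (c' · ≠ 0)) ?_ ?_ ?_ ?_ ?_)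
  · exact Finset.disjoint_filter.mpr fun i _ h => not_not.mpr (hdisj i h)
  · simpa [Finset.filter_nonempty_iff, Function.ne_iff] using hc0
  · simpa [Finset.filter_nonempty_iff, Function.ne_iff] using hc'0
  · rwa [sum_filter_ne_zero_eq_linearCombination]
  · rwa [sum_filter_ne_zero_eq_linearCombination]

theorem notCoveredByTwoHyperplanes_of_not_hasKDisjointZeroSum_two (f : ι → G)
    (hf : ¬HasKDisjointZeroSum 2 (Finset.univ.val.map f)) :
    NotCoveredByTwoHyperplanes (Finset.univ.val.map fun i =>
      (LinearMap.proj i).comp (LinearMap.ker (Fintype.linearCombination (ZMod 2) f)).subtype) := by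
  set C := LinearMap.ker (Fintype.linearCombination (ZMod 2) f)
  intro u v hu hv
  set e := evalEquiv (ZMod 2) C
  have hcoe : ∀ w, w ≠ 0 → ((e.symm w : C) : ι → ZMod 2) ≠ 0 := fun w hw => by
    simpa using e.symm.map_ne_zero_iff.mpr hw
  obtain ⟨i, hui, hvi⟩ := exists_ne_zero_ne_zero_of_not_hasKDisjointZeroSum_two f hf
    (e.symm u).2 (e.symm v).2 (hcoe u hu) (hcoe v hv)
  refine ⟨_, Multiset.mem_map_of_mem _ (Finset.mem_univ_val i), ?_, ?_⟩
  · rwa [← apply_evalEquiv_symm_apply]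
  · rwa [← apply_evalEquiv_symm_apply]

end Code

theorem two_mul_card_le_of_not_hasKDisjointZeroSum_two {G : Type*} [AddCommGroup G]
    [Module (ZMod 2) G] [FiniteDimensional (ZMod 2) G] (S : Multiset G)
    (hS : ¬HasKDisjointZeroSum 2 S) : 2 * Multiset.card S ≤ 3 * finrank (ZMod 2) G + 3 := by
  classical
  rw [← Multiset.map_univ_coe S] at hS
  set f := fun x : S => (x : G)
  have hT := notCoveredByTwoHyperplanes_of_not_hasKDisjointZeroSum_two f hS
  set Φ := Fintype.linearCombination (ZMod 2) f
  have hrank : Multiset.card S ≤ finrank (ZMod 2) (LinearMap.ker Φ) + finrank (ZMod 2) G := by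
    have hsum := LinearMap.finrank_range_add_finrank_ker Φ
    rw [finrank_fintype_fun_eq_card, Multiset.card_coe] at hsum
    have := Submodule.finrank_le (LinearMap.range Φ)
    omega
  have := hT.three_mul_finrank_le
  rw [Subspace.dual_finrank_eq, Multiset.card_map, Finset.card_val, Finset.card_univ,
    Multiset.card_coe] at this
  omega

theorem statement17_general (r : ℕ) :
    2 * Dk (Fin r → ZMod 2) 2 < 3 * r + 6 := by
  have hD : Dk (Fin r → ZMod 2) 2 ≤ (3 * r + 5) / 2 := Nat.sInf_le fun S hS => by
    by_contra hS2
    have := two_mul_card_le_of_not_hasKDisjointZeroSum_two S hS2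
    rw [finrank_fin_fun] at this
    omega
  omega

theorem statement17 (r : ℕ) (hr : 1 ≤ r) :
    2 * Dk (Fin r → ZMod 2) 2 < 3 * r + 6 :=
  statement17_general r
end
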